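/- arXiv:1711.02848 — 3 statements merged into one kernel-verified Lean document; each statement's English description precedes it below -/
import Mathlib

section
/- Let G be a simple graph. Suppose that for every signature σ: E(G) → {1, −1}, the signed graph (G, σ) admits a 4-colouring, i.e., a map f: V(G) → {−2, −1, 1, 2} such that f(x) ≠ σ(xy)·f(y) for every edge xy. Then for every 2-list assignment L of G (an assignment to each vertex v of a set L(v) of exactly two integers), there exists an L-colouring φ of G (a map with φ(v) ∈ L(v) for all v) such that for each colour i, the set φ⁻¹(i) induces a bipartite subgraph of G. (This is the paper's main theorem; the paper states it for planar G, but planarity plays no role in the hypothesis or proof.) -/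
/-- **Main theorem.** Let `G` be a simple graph. Suppose that for every signature
`σ : E(G) → {1, -1}`, the signed graph `(G, σ)` admits a 4-colouring, i.e. a map
`f : V → {-2, -1, 1, 2}` with `f x ≠ σ(xy) * f y` for every edge `xy`. Then for every
2-list assignment `L` (each `L v` a set of exactly two integers) there is an
`L`-colouring `φ` of `G` such that every colour class `φ⁻¹(i)` induces a bipartite
(i.e. 2-colourable) subgraph of `G`. -/
theorem signed_four_colourable_implies_two_list_bipartite
    {V : Type*} (G : SimpleGraph V)
    (h4 : ∀ σ : Sym2 V → ℤ, (∀ e ∈ G.edgeSet, σ e = 1 ∨ σ e = -1) →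
      ∃ f : V → ℤ, (∀ v, f v ∈ ({-2, -1, 1, 2} : Set ℤ)) ∧
        ∀ x y, G.Adj x y → f x ≠ σ s(x, y) * f y)
    (L : V → Finset ℤ) (hL : ∀ v, (L v).card = 2) :
    ∃ φ : V → ℤ, (∀ v, φ v ∈ L v) ∧
      ∀ i : ℤ, (G.induce {v | φ v = i}).Colorable 2 := by
  classical
  have hne : ∀ v, (L v).Nonempty := fun v => Finset.card_pos.mp (by rw [hL v]; norm_num)
  set a : V → ℤ := fun v => (L v).min' (hne v) with ha
  set b : V → ℤ := fun v => (L v).max' (hne v) with hb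
  have hab : ∀ v, a v < b v := fun v =>
    (L v).min'_lt_max'_of_card (by rw [hL v]; norm_num)
  let σ : Sym2 V → ℤ := Sym2.lift ⟨fun x y => if a x = b y ∨ b x = a y then -1 else 1,
    fun x y => by
      dsimp only
      by_cases h : a x = b y ∨ b x = a y
      · rw [if_pos h, if_pos (by tauto)]
      · rw [if_neg h, if_neg (by tauto)]⟩
  obtain ⟨f, hf, hedge⟩ := h4 σ (by
    intro e _
    induction e using Sym2.ind with
    | _ x y =>
      simp only [σ, Sym2.lift_mk]
      split <;> simp)
  have hσ : ∀ x y : V, σ s(x, y) = if a x = b y ∨ b x = a y then -1 else 1 := by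
    intro x y; simp [σ]
  -- value facts
  have hfv : ∀ v, f v = -2 ∨ f v = -1 ∨ f v = 1 ∨ f v = 2 := by
    intro v; have := hf v; simpa using this
  refine ⟨fun v => if 0 < f v then a v else b v, ?_, ?_⟩
  · intro v
    dsimp only
    split
    · exact (L v).min'_mem _
    · exact (L v).max'_mem _
  · intro i
    have key : ∀ x y : V, G.Adj x y →
        (if 0 < f x then a x else b x) = (if 0 < f y then a y else b y) →
        (f x).natAbs ≠ (f y).natAbs := by
      intro x y hxy hφ habs
      have hE := hedge x y hxy
      rw [hσ x y] at hE
      have hcases : f x = f y ∨ f x = -f y := Int.natAbs_eq_natAbs_iff.mp habs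
      have hax := hab x
      have hay := hab y
      by_cases hcond : a x = b y ∨ b x = a y
      · rw [if_pos hcond] at hE
        have hfeq : f x = f y := by
          rcases hcases with h | h
          · exact h
          · exact absurd (by linarith) hE
        by_cases hx : 0 < f x
        · have hy : 0 < f y := hfeq ▸ hx
          rw [if_pos hx, if_pos hy] at hφ
          rcases hcond with h | h <;> omega
        · have hy : ¬ 0 < f y := hfeq ▸ hx
          rw [if_neg hx, if_neg hy] at hφ
          rcases hcond with h | h <;> omega
      · rw [if_neg hcond] at hE
        have hfeq : f x = -f y := by
          rcases hcases with h | h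
          · exact absurd (by linarith) hE
          · exact h
        have hfx0 : f x ≠ 0 := by rcases hfv x with h|h|h|h <;> omega
        have hfy0 : f y ≠ 0 := by rcases hfv y with h|h|h|h <;> omega
        by_cases hx : 0 < f x
        · have hy : ¬ 0 < f y := by omega
          rw [if_pos hx, if_neg hy] at hφ
          exact hcond (Or.inl hφ)
        · have hy : 0 < f y := by omega
          rw [if_neg hx, if_pos hy] at hφ
          exact hcond (Or.inr hφ)
    refine ⟨⟨fun v => if (f v.1).natAbs = 1 then 0 else 1, ?_⟩⟩
    intro v w hvw hc
    have hadj : G.Adj v.1 w.1 := hvw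
    have hφ : (if 0 < f v.1 then a v.1 else b v.1) = (if 0 < f w.1 then a w.1 else b w.1) := by
      have h1 : (if 0 < f v.1 then a v.1 else b v.1) = i := v.2
      have h2 : (if 0 < f w.1 then a w.1 else b w.1) = i := w.2
      rw [h1, h2]
    have hne' := key v.1 w.1 hadj hφ
    have h1 : (f v.1).natAbs = 1 ∨ (f v.1).natAbs = 2 := by
      rcases hfv v.1 with h|h|h|h <;> simp [h]
    have h2 : (f w.1).natAbs = 1 ∨ (f w.1).natAbs = 2 := by
      rcases hfv w.1 with h|h|h|h <;> simp [h]
    by_cases hv1 : (f v.1).natAbs = 1 <;> by_cases hw1 : (f w.1).natAbs = 1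
    · exact hne' (hv1.trans hw1.symm)
    · simp [hv1, hw1] at hc
    · simp [hv1, hw1] at hc
    · omega
end

section
/- Let G be a simple graph, L a 2-list assignment of G with each L(v) a set of exactly two integers, and define a signature σ of G by σ(uv) = −1 if min L(u) = max L(v) or min L(v) = max L(u), and σ(uv) = 1 otherwise. Suppose f: V(G) → {−2, −1, 1, 2} is a 4-colouring of the signed graph (G, σ), and define φ: V(G) → ℤ by φ(v) = max L(v) if f(v) ∈ {1, 2} and φ(v) = min L(v) if f(v) ∈ {−1, −2}. Then φ is an L-colouring of G and for every edge uv of G with φ(u) = φ(v), one has |f(u)| ≠ |f(v)|. -/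
/-- Let `G` be a simple graph, `L` a 2-list assignment with each `L v` a set of exactly two
integers whose smaller and larger elements are `mn v` and `mx v`. Define the signature
`σ(uv) = -1` if `min L(u) = max L(v)` or `min L(v) = max L(u)`, and `σ(uv) = 1` otherwise.
If `f : V → {-2, -1, 1, 2}` is a 4-colouring of the signed graph `(G, σ)` and
`φ(v) = max L(v)` when `f v ∈ {1, 2}`, `φ(v) = min L(v)` when `f v ∈ {-1, -2}`, then `φ`
is an `L`-colouring of `G` and for every edge `uv` with `φ u = φ v` one has `|f u| ≠ |f v|`. -/
theorem L_colouring_from_signed_colouring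
    {V : Type*} (G : SimpleGraph V)
    (L : V → Finset ℤ) (hL : ∀ v, (L v).card = 2)
    (mn mx : V → ℤ)
    (hmn : ∀ v, mn v ∈ L v) (hmx : ∀ v, mx v ∈ L v) (hlt : ∀ v, mn v < mx v)
    (σ : V → V → ℤ)
    (hσ : ∀ u v, σ u v = if mn u = mx v ∨ mn v = mx u then -1 else 1)
    (f : V → ℤ)
    (hf1 : ∀ v, f v ∈ ({-2, -1, 1, 2} : Set ℤ))
    (hf2 : ∀ u v, G.Adj u v → f u ≠ σ u v * f v)
    (φ : V → ℤ)
    (hφ : ∀ v, φ v = if f v = 1 ∨ f v = 2 then mx v else mn v) :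
    (∀ v, φ v ∈ L v) ∧
      ∀ u v, G.Adj u v → φ u = φ v → |f u| ≠ |f v| := by
  constructor
  · intro v
    rw [hφ v]
    split
    · exact hmx v
    · exact hmn v
  · intro u v hadj heq habs
    have h2 := hf2 u v hadj
    rw [hσ u v] at h2
    rw [hφ u, hφ v] at heq
    have hu := hf1 u
    have hv := hf1 v
    simp only [Set.mem_insert_iff, Set.mem_singleton_iff] at hu hv
    have hltu := hlt u
    have hltv := hlt v
    by_cases hc : mn u = mx v ∨ mn v = mx u
    · rw [if_pos hc] at h2
      rcases hc with hc | hc <;>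
      rcases hu with h | h | h | h <;> rcases hv with h' | h' | h' | h' <;>
        simp only [h, h'] at heq h2 habs <;> norm_num at * <;> omega
    · rw [if_neg hc] at h2
      push_neg at hc
      rcases hu with h | h | h | h <;> rcases hv with h' | h' | h' | h' <;>
        simp only [h, h'] at heq h2 habs <;> norm_num at * <;> omega
end

section
/- Let G be a simple graph, L a 2-list assignment of G, σ the signature defined by σ(uv) = −1 if min L(u) = max L(v) or min L(v) = max L(u) and σ(uv) = 1 otherwise, f a 4-colouring of (G, σ), and φ the L-colouring defined by φ(v) = max L(v) if f(v) ∈ {1, 2} and φ(v) = min L(v) if f(v) ∈ {−1, −2}. Then for every integer i, the map ψ(v) = |f(v)| is a proper 2-colouring (with colours 1 and 2) of the subgraph of G induced by X_i = {v ∈ V(G) : φ(v) = i}; in particular G[X_i] is bipartite. -/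
/-- With `G`, `L`, `σ`, `f`, `φ` as in the construction of the main proof, for every integer
`i` the map `ψ(v) = |f v|` is a proper 2-colouring with colours `1` and `2` of the subgraph
of `G` induced by `X_i = {v | φ v = i}`; in particular `G[X_i]` is bipartite
(2-colourable). -/
theorem abs_f_proper_two_colouring_of_colour_class
    {V : Type*} (G : SimpleGraph V)
    (L : V → Finset ℤ) (hL : ∀ v, (L v).card = 2)
    (mn mx : V → ℤ)
    (hmn : ∀ v, mn v ∈ L v) (hmx : ∀ v, mx v ∈ L v) (hlt : ∀ v, mn v < mx v)
    (σ : V → V → ℤ)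
    (hσ : ∀ u v, σ u v = if mn u = mx v ∨ mn v = mx u then -1 else 1)
    (f : V → ℤ)
    (hf1 : ∀ v, f v ∈ ({-2, -1, 1, 2} : Set ℤ))
    (hf2 : ∀ u v, G.Adj u v → f u ≠ σ u v * f v)
    (φ : V → ℤ)
    (hφ : ∀ v, φ v = if f v = 1 ∨ f v = 2 then mx v else mn v) :
    ∀ i : ℤ,
      (∀ v, φ v = i → |f v| = 1 ∨ |f v| = 2) ∧
      (∀ u v, G.Adj u v → φ u = i → φ v = i → |f u| ≠ |f v|) ∧
      (G.induce {v | φ v = i}).Colorable 2 := by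
  intro i
  have p1 : ∀ v, φ v = i → |f v| = 1 ∨ |f v| = 2 := by
    intro v _
    have h := hf1 v
    simp only [Set.mem_insert_iff, Set.mem_singleton_iff] at h
    rcases h with h|h|h|h <;> rw [h] <;> norm_num
  have key : ∀ u v, G.Adj u v → φ u = i → φ v = i → |f u| ≠ |f v| := by
    intro u v hadj hu hv heq
    have hne := hf2 u v hadj
    rw [hσ u v] at hne
    have hu' := hφ u; have hv' := hφ v
    have h1 := hf1 u; have h2 := hf1 v
    simp only [Set.mem_insert_iff, Set.mem_singleton_iff] at h1 h2
    have hltu := hlt u; have hltv := hlt v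
    rw [hu'] at hu; rw [hv'] at hv
    split_ifs at hne hu hv
    all_goals rcases h1 with h1|h1|h1|h1
    all_goals rcases h2 with h2|h2|h2|h2
    all_goals rw [h1, h2] at heq hne
    all_goals try norm_num at heq
    all_goals try norm_num at hne
    all_goals omega
  refine ⟨p1, key, ?_⟩
  refine ⟨SimpleGraph.Coloring.mk (fun v => if |f v.1| = 1 then 0 else 1) ?_⟩
  rintro ⟨u, hu⟩ ⟨v, hv⟩ hadj hc
  have hk := key u v hadj hu hv
  have pu := p1 u hu
  have pv := p1 v hv
  simp only at hc
  split_ifs at hc <;> simp_all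
end
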